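/- arXiv:2312.08258 — 2 statements merged into one kernel-verified Lean document; each statement's English description precedes it below -/
import Mathlib

section
/- Let n ≥ 2 and let M be the n×n symmetric integer matrix with M₀₀ = 1, with M₀ⱼ = Mⱼ₀ = 1 for every j ≠ 0, with Mⱼⱼ = −1 for every j ≠ 0, and with all other entries 0. Then the bilinear form of M restricted to the sublattice {v ∈ ℤⁿ : Σᵢ vᵢ = 0} is negative definite and even; that is, vᵀ M v < 0 for every nonzero v with coordinate sum 0, and 2 divides vᵀ M v for every v with coordinate sum 0. -/
open Matrix Finset

/-- The bilinear form of `M` restricted to the sublattice of coordinate-sum-zero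
vectors is negative definite and even. -/
theorem stmt_2 (n : ℕ) [NeZero n] (hn : 2 ≤ n)
    (M : Matrix (Fin n) (Fin n) ℤ)
    (h00 : M 0 0 = 1)
    (h0j : ∀ j : Fin n, j ≠ 0 → M 0 j = 1 ∧ M j 0 = 1)
    (hjj : ∀ j : Fin n, j ≠ 0 → M j j = -1)
    (hother : ∀ i j : Fin n, i ≠ 0 → j ≠ 0 → i ≠ j → M i j = 0) :
    (∀ v : Fin n → ℤ, (∑ i, v i) = 0 → v ≠ 0 → v ⬝ᵥ M.mulVec v < 0) ∧
    (∀ v : Fin n → ℤ, (∑ i, v i) = 0 → (2 : ℤ) ∣ v ⬝ᵥ M.mulVec v) := by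
  have key : ∀ v : Fin n → ℤ, (∑ i, v i) = 0 →
      v ⬝ᵥ M.mulVec v = -∑ i, (v i)^2 := by
    intro v hS
    have hMv0 : M.mulVec v 0 = 0 := by
      have h1 : ∀ j : Fin n, M 0 j = 1 := by
        intro j
        rcases eq_or_ne j 0 with h | h
        · rw [h, h00]
        · exact (h0j j h).1
      simp only [Matrix.mulVec, dotProduct, h1, one_mul]
      exact hS
    have hMvi : ∀ i : Fin n, i ≠ 0 → M.mulVec v i = v 0 - v i := by
      intro i hi
      have hsub : ({0, i} : Finset (Fin n)) ⊆ univ := subset_univ _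
      have hzero : ∀ j ∈ univ, j ∉ ({0, i} : Finset (Fin n)) → M i j * v j = 0 := by
        intro j _ hj
        simp only [mem_insert, mem_singleton, not_or] at hj
        rw [hother i j hi hj.1 (fun h => hj.2 h.symm), zero_mul]
      have : M.mulVec v i = ∑ j ∈ ({0, i} : Finset (Fin n)), M i j * v j :=
        (Finset.sum_subset hsub hzero).symm
      rw [this, Finset.sum_pair (Ne.symm hi), (h0j i hi).2, hjj i hi]
      ring
    have hQ : v ⬝ᵥ M.mulVec v = ∑ i, v i * M.mulVec v i := rfl
    rw [hQ, ← Finset.add_sum_erase univ _ (mem_univ 0), hMv0, mul_zero, zero_add]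
    have hrw : ∑ i ∈ univ.erase 0, v i * M.mulVec v i
        = ∑ i ∈ univ.erase 0, (v i * v 0 - (v i)^2) := by
      apply Finset.sum_congr rfl
      intro i hi
      rw [hMvi i (Finset.mem_erase.mp hi).1]
      ring
    rw [hrw, Finset.sum_sub_distrib, ← Finset.sum_mul]
    have hS' : ∑ i ∈ univ.erase 0, v i = -v 0 := by
      have := Finset.add_sum_erase univ v (mem_univ 0)
      omega
    have hsq : ∑ i, (v i)^2 = (v 0)^2 + ∑ i ∈ univ.erase 0, (v i)^2 :=
      (Finset.add_sum_erase univ _ (mem_univ 0)).symm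
    rw [hS', hsq]
    ring
  constructor
  · intro v hS hv
    rw [key v hS]
    have hpos : 0 < ∑ i, (v i)^2 := by
      obtain ⟨i, hi⟩ : ∃ i, v i ≠ 0 := by
        by_contra h
        push_neg at h
        exact hv (funext h)
      apply Finset.sum_pos' (fun j _ => sq_nonneg _)
      exact ⟨i, mem_univ i, by positivity⟩
    omega
  · intro v hS
    rw [key v hS]
    rw [dvd_neg]
    have : ∑ i, (v i)^2 = (∑ i, ((v i)^2 - v i)) + ∑ i, v i := by
      rw [Finset.sum_sub_distrib]; ring
    rw [this, hS, add_zero]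
    apply Finset.dvd_sum
    intro i _
    have : (v i)^2 - v i = (v i - 1) * v i := by ring
    rw [this]
    have h := (Int.even_mul_succ_self (v i - 1)).two_dvd
    simpa using h
end

section
/- Let m ≥ 1 be an integer and let L be the 3×3 integer matrix with rows (1,1,0), (1,1,1), (0,1,−m). Then the vector w = (m, −m, −1) satisfies wᵀ L w = m; consequently, every vector v = c·w (c ∈ ℤ) in the L-orthogonal complement of e₀ and e₂ satisfies vᵀ L v = c²·m, and the restriction of the bilinear form of L to this rank-one sublattice is even (i.e. 2 divides vᵀ L v for all such v) if and only if m is even. -/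
open Matrix

/-- The vector `w = (m, -m, -1)` spanning the second homology of `W₂` satisfies
`wᵀ L w = m`; hence `(c • w)ᵀ L (c • w) = c² m`, and the restriction of the form to
this rank-one sublattice is even if and only if `m` is even. -/
theorem stmt_5 (m : ℤ) (hm : 1 ≤ m)
    (L : Matrix (Fin 3) (Fin 3) ℤ)
    (hL : L = !![1, 1, 0; 1, 1, 1; 0, 1, -m]) :
    (![m, -m, -1] ⬝ᵥ L.mulVec ![m, -m, -1] = m) ∧
    (∀ c : ℤ, (c • ![m, -m, -1]) ⬝ᵥ L.mulVec (c • ![m, -m, -1]) = c ^ 2 * m) ∧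
    ((∀ c : ℤ, (2 : ℤ) ∣ (c • ![m, -m, -1]) ⬝ᵥ L.mulVec (c • ![m, -m, -1])) ↔ (2 : ℤ) ∣ m) := by
  subst hL
  have key : ∀ c : ℤ, (c • ![m, -m, -1]) ⬝ᵥ
      (!![1, 1, 0; 1, 1, 1; 0, 1, -m] : Matrix (Fin 3) (Fin 3) ℤ).mulVec (c • ![m, -m, -1])
      = c ^ 2 * m := by
    intro c
    simp [dotProduct, mulVec, Fin.sum_univ_three]
    ring
  refine ⟨?_, key, ?_⟩
  · have := key 1; simpa using this
  · constructor
    · intro h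
      have := h 1
      rw [key 1] at this
      simpa using this
    · intro h c
      rw [key c]
      exact Dvd.dvd.mul_left h _
end
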